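/- arXiv:2407.10150 — 3 statements merged into one kernel-verified Lean document; each statement's English description precedes it below -/
import Mathlib

section
/- Let n ≥ 1 and let φ : M_n(ℂ) → M_n(ℂ) be a (not necessarily linear, additive or continuous) map such that for any a, b ∈ M_n(ℂ) there is an algebra automorphism θ_{a,b} of M_n(ℂ) with φ(a)φ(b) = θ_{a,b}(ab). Then either φ or −φ is an algebra automorphism of M_n(ℂ). -/
/-- An algebra automorphism of a complex algebra: a bijective complex-linear map
which is multiplicative. -/
def IsAlgAutomorphism {A : Type*} [Ring A] [Algebra ℂ A] (θ : A → A) : Prop :=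
  Function.Bijective θ ∧ IsLinearMap ℂ θ ∧ ∀ a b : A, θ (a * b) = θ a * θ b

/-!
Each product `φ a * φ b` is the image of `a * b` under an automorphism, so `a * b = 0` forces
`φ a * φ b = 0`, and `tr (φ a * φ b) = tr (a * b)` since automorphisms of `M_n(ℂ)` preserve
the trace. Hence the squares `φ(Eᵢᵢ)²` are pairwise orthogonal idempotents of trace one, i.e.
rank-one idempotents, and one invertible matrix conjugates all of them to the matrix units
`Eᵢᵢ`. After this conjugation `φ` acts entrywise, `φ(a)ᵢⱼ = μᵢⱼ aᵢⱼ` with `μᵢⱼ μⱼᵢ = 1`.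
Testing `a * b = 0` on `a = Eᵢₖ + Eᵢₗ`, `b = Eₖⱼ - Eₗⱼ` shows that `μᵢₖ μₖⱼ` does not depend
on `k`, which forces `μᵢⱼ = c dⱼ / dᵢ` with `c² = 1`. So `φ` is `c` times an inner
automorphism, and `c = ±1`.
-/

open Matrix

section Automorphism

variable {A : Type*} [Ring A] [Algebra ℂ A] {θ σ : A → A}

theorem IsAlgAutomorphism.map_one (h : IsAlgAutomorphism θ) : θ 1 = 1 := by
  obtain ⟨y, hy⟩ := h.1.2 1
  calc θ 1 = θ 1 * θ y := by rw [hy, mul_one]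
    _ = 1 := by rw [← h.2.2, one_mul, hy]

def IsAlgAutomorphism.toAlgHom (h : IsAlgAutomorphism θ) : A →ₐ[ℂ] A :=
  AlgHom.ofLinearMap (IsLinearMap.mk' θ h.2.1) h.map_one h.2.2

theorem IsAlgAutomorphism.comp (hσ : IsAlgAutomorphism σ) (hθ : IsAlgAutomorphism θ) :
    IsAlgAutomorphism (σ ∘ θ) :=
  ⟨hσ.1.comp hθ.1, (hσ.toAlgHom.toLinearMap ∘ₗ hθ.toAlgHom.toLinearMap).isLinear,
    fun a b => by simp only [Function.comp_apply, hθ.2.2, hσ.2.2]⟩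

theorem isAlgAutomorphism_conj (u : Aˣ) : IsAlgAutomorphism fun x => (u : A) * x * ↑u⁻¹ :=
  ⟨Function.bijective_iff_has_inverse.mpr
      ⟨fun y => ↑u⁻¹ * y * u, fun x => by simp [mul_assoc], fun y => by simp [mul_assoc]⟩,
    ⟨fun x y => by simp only [mul_add, add_mul],
      fun c x => by simp only [mul_smul_comm, smul_mul_assoc]⟩,
    fun a b => by simp [mul_assoc]⟩

end Automorphism

namespace Matrix

variable {ι K : Type*} [Fintype ι] [DecidableEq ι] [Field K] [CharZero K]

theorem exists_eq_vecMulVec_of_isIdempotentElem {p : Matrix ι ι K} (hp : IsIdempotentElem p)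
    (htr : p.trace = 1) :
    ∃ v w : ι → K, p = vecMulVec v w ∧ w ⬝ᵥ v = 1 := by
  have hproj : LinearMap.IsProj (LinearMap.range (toLin' p)) (toLin' p) :=
    LinearMap.IsIdempotentElem.isProj_range _ (hp.map toLinAlgEquiv')
  have hrank : Module.finrank K (LinearMap.range (toLin' p)) = 1 := by
    have := hproj.trace
    rw [LinearMap.trace_eq_matrix_trace K (Pi.basisFun K ι), LinearMap.toMatrix_eq_toMatrix',
      LinearMap.toMatrix'_toLin', htr] at this
    exact_mod_cast this.symm
  obtain ⟨⟨v, _⟩, -, hv⟩ := finrank_eq_one_iff'.mp hrank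
  have hcol : ∀ j, ∃ c : K, c • v = p *ᵥ Pi.single j 1 := fun j => by
    obtain ⟨c, hc⟩ := hv ⟨_, LinearMap.mem_range_self (toLin' p) (Pi.single j 1)⟩
    exact ⟨c, congrArg Subtype.val hc⟩
  choose w hw using hcol
  have hp_eq : p = vecMulVec v w := by
    ext i j
    simpa [vecMulVec_apply, mul_comm] using (congrFun (hw j) i).symm
  refine ⟨v, w, hp_eq, ?_⟩
  rw [dotProduct_comm, ← trace_vecMulVec, ← hp_eq, htr]

theorem exists_units_conj_eq_single {p : ι → Matrix ι ι K}
    (hidem : ∀ i, IsIdempotentElem (p i)) (htr : ∀ i, (p i).trace = 1)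
    (horth : Pairwise fun i j => p i * p j = 0) :
    ∃ u : (Matrix ι ι K)ˣ, ∀ i, (u : Matrix ι ι K) * p i * (↑u⁻¹ : Matrix ι ι K) = single i i 1 :=
    by
  choose v w hp hwv using fun i => exists_eq_vecMulVec_of_isIdempotentElem (hidem i) (htr i)
  have hdual : ∀ i j, w i ⬝ᵥ v j = (1 : Matrix ι ι K) i j := by
    intro i j
    rcases eq_or_ne i j with rfl | hij
    · rw [hwv, one_apply_eq]
    have h : p i * p j = 0 := horth hij
    rw [hp, hp, vecMulVec_mul_vecMulVec, vecMulVec_eq_zero, smul_eq_zero] at h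
    have hv : v i ≠ 0 := fun h0 => by simpa [h0] using hwv i
    have hw : w j ≠ 0 := fun h0 => by simpa [h0] using hwv j
    rw [one_apply_ne hij]
    tauto
  have hQP : of w * (of v)ᵀ = 1 := by
    ext i j
    exact hdual i j
  refine ⟨⟨of w, (of v)ᵀ, hQP, mul_eq_one_comm.mp hQP⟩, fun i => ?_⟩
  have hcol : of w *ᵥ v i = Pi.single i 1 := by
    ext k
    simp [mulVec, hdual, one_apply, Pi.single_apply]
  have hrow : w i ᵥ* (of v)ᵀ = Pi.single i 1 := by
    ext k
    rw [show (w i ᵥ* (of v)ᵀ) k = w i ⬝ᵥ v k from rfl, hdual, one_apply, Pi.single_apply]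
    exact if_congr eq_comm rfl rfl
  show of w * p i * (of v)ᵀ = _
  rw [hp, mul_vecMulVec, vecMulVec_mul, hcol, hrow,
    single_eq_single_vecMulVec_single]

end Matrix

def PreservesProductsUpToAut {A : Type*} [Ring A] [Algebra ℂ A] (φ : A → A) : Prop :=
  ∀ a b, ∃ θ : A → A, IsAlgAutomorphism θ ∧ φ a * φ b = θ (a * b)

def singleCoeff {ι : Type*} [DecidableEq ι] (ψ : Matrix ι ι ℂ → Matrix ι ι ℂ)
    (i j : ι) : ℂ :=
  ψ (single i j 1) i j

namespace PreservesProductsUpToAut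

section Algebra

variable {A : Type*} [Ring A] [Algebra ℂ A] {φ : A → A}

theorem comp (hφ : PreservesProductsUpToAut φ) {σ : A → A} (hσ : IsAlgAutomorphism σ) :
    PreservesProductsUpToAut (σ ∘ φ) := by
  intro a b
  obtain ⟨θ, hθ, h⟩ := hφ a b
  exact ⟨σ ∘ θ, hσ.comp hθ, by simp only [Function.comp_apply, ← hσ.2.2, h]⟩

theorem mul_eq_zero (hφ : PreservesProductsUpToAut φ) {a b : A} (hab : a * b = 0) :
    φ a * φ b = 0 := by
  obtain ⟨θ, hθ, h⟩ := hφ a b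
  rw [h, hab, hθ.2.1.map_zero]

theorem isIdempotentElem_mul_self (hφ : PreservesProductsUpToAut φ) {e : A}
    (he : IsIdempotentElem e) : IsIdempotentElem (φ e * φ e) := by
  obtain ⟨θ, hθ, h⟩ := hφ e e
  rw [h, he.eq]
  exact (hθ.2.2 e e).symm.trans (congrArg θ he.eq)

end Algebra

section MatrixAlgebra

variable {ι : Type*} [Fintype ι] [DecidableEq ι]

theorem trace_mul {φ : Matrix ι ι ℂ → Matrix ι ι ℂ} (hφ : PreservesProductsUpToAut φ)
    (a b : Matrix ι ι ℂ) : (φ a * φ b).trace = (a * b).trace := by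
  obtain ⟨θ, hθ, h⟩ := hφ a b
  rw [h]
  exact trace_map' hθ.toAlgHom (a * b)

variable {ψ : Matrix ι ι ℂ → Matrix ι ι ℂ}

theorem map_single_eq (hψ : PreservesProductsUpToAut ψ)
    (hsq : ∀ i, ψ (single i i 1) * ψ (single i i 1) = single i i 1) (i j : ι) :
    ψ (single i j 1) = single i j (singleCoeff ψ i j) := by
  have hrow : ∀ k, k ≠ i → single k k 1 * ψ (single i j 1) = 0 := fun k hk => by
    have h0 : ψ (single k k 1) * ψ (single i j 1) = 0 := hψ.mul_eq_zero (by simp [hk])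
    rw [← hsq k, mul_assoc, h0, mul_zero]
  have hcol : ∀ l, l ≠ j → ψ (single i j 1) * single l l 1 = 0 := fun l hl => by
    have h0 : ψ (single i j 1) * ψ (single l l 1) = 0 := hψ.mul_eq_zero (by simp [Ne.symm hl])
    rw [← hsq l, ← mul_assoc, h0, zero_mul]
  ext k l
  by_cases hk : k = i
  · subst hk
    by_cases hl : l = j
    · rw [hl, single_apply_same, singleCoeff]
    · rw [single_apply_of_col_ne _ _ (Ne.symm hl)]
      simpa using congr($(hcol l hl) k l)
  · rw [single_apply_of_row_ne (Ne.symm hk)]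
    simpa using congr($(hrow k hk) k l)

theorem singleCoeff_mul_map_apply (hψ : PreservesProductsUpToAut ψ)
    (hsq : ∀ i, ψ (single i i 1) * ψ (single i i 1) = single i i 1) (a : Matrix ι ι ℂ)
    (i j : ι) : singleCoeff ψ j i * ψ a i j = a i j := by
  simpa [map_single_eq hψ hsq, trace_single_mul] using hψ.trace_mul (single j i 1) a

theorem singleCoeff_mul_singleCoeff_swap (hψ : PreservesProductsUpToAut ψ)
    (hsq : ∀ i, ψ (single i i 1) * ψ (single i i 1) = single i i 1) (i j : ι) :
    singleCoeff ψ i j * singleCoeff ψ j i = 1 := by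
  have h := singleCoeff_mul_map_apply hψ hsq (single i j 1) i j
  rw [single_apply_same] at h
  exact (mul_comm _ _).trans h

theorem map_apply (hψ : PreservesProductsUpToAut ψ)
    (hsq : ∀ i, ψ (single i i 1) * ψ (single i i 1) = single i i 1) (a : Matrix ι ι ℂ)
    (i j : ι) : ψ a i j = singleCoeff ψ i j * a i j := by
  rw [← singleCoeff_mul_map_apply hψ hsq a i j, ← mul_assoc,
    singleCoeff_mul_singleCoeff_swap hψ hsq, one_mul]

theorem singleCoeff_mul_singleCoeff_eq (hψ : PreservesProductsUpToAut ψ)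
    (hsq : ∀ i, ψ (single i i 1) * ψ (single i i 1) = single i i 1) (i j k l : ι) :
    singleCoeff ψ i k * singleCoeff ψ k j = singleCoeff ψ i l * singleCoeff ψ l j := by
  rcases eq_or_ne k l with rfl | hkl
  · rfl
  have hab : (single i k 1 + single i l 1) * (single k j 1 - single l j (1 : ℂ)) = 0 := by
    simp [mul_sub, add_mul, hkl, hkl.symm]
  rw [← sub_eq_zero]
  simpa [mul_apply, map_apply hψ hsq, single_apply, mul_add, add_mul, mul_sub, hkl, hkl.symm]
    using congr($(hψ.mul_eq_zero hab) i j)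

theorem exists_eq_smul_conj_of_mul_self_single [Nonempty ι] (hψ : PreservesProductsUpToAut ψ)
    (hsq : ∀ i, ψ (single i i 1) * ψ (single i i 1) = single i i 1) :
    ∃ c : ℂ, c * c = 1 ∧ ∃ u : (Matrix ι ι ℂ)ˣ,
      ∀ a, ψ a = c • ((u : Matrix ι ι ℂ) * a * (↑u⁻¹ : Matrix ι ι ℂ)) := by
  have hμ_ne : ∀ i j, singleCoeff ψ i j ≠ 0 := fun i j =>
    left_ne_zero_of_mul_eq_one (singleCoeff_mul_singleCoeff_swap hψ hsq i j)
  have hdiag : ∀ i j, singleCoeff ψ i i = singleCoeff ψ j j := fun i j => by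
    have h := singleCoeff_mul_singleCoeff_eq hψ hsq i j i j
    rw [mul_comm (singleCoeff ψ i j)] at h
    exact mul_right_cancel₀ (hμ_ne i j) h
  obtain ⟨i₀⟩ := ‹Nonempty ι›
  have hμ : ∀ i j, singleCoeff ψ i j =
      singleCoeff ψ i₀ i₀ * (singleCoeff ψ i₀ i)⁻¹ * singleCoeff ψ i₀ j := by
    intro i j
    have h := singleCoeff_mul_singleCoeff_eq hψ hsq i₀ j i j
    rw [hdiag j i₀] at h
    field_simp [hμ_ne i₀ i]
    linear_combination h
  refine ⟨singleCoeff ψ i₀ i₀, singleCoeff_mul_singleCoeff_swap hψ hsq i₀ i₀,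
    ⟨diagonal fun k => (singleCoeff ψ i₀ k)⁻¹, diagonal (singleCoeff ψ i₀), ?_, ?_⟩,
    fun a => ?_⟩
  · rw [diagonal_mul_diagonal, ← diagonal_one]
    exact congrArg diagonal (funext fun k => inv_mul_cancel₀ (hμ_ne i₀ k))
  · rw [diagonal_mul_diagonal, ← diagonal_one]
    exact congrArg diagonal (funext fun k => mul_inv_cancel₀ (hμ_ne i₀ k))
  · ext i j
    rw [map_apply hψ hsq, hμ i j]
    simp only [Units.inv_mk, Matrix.smul_apply, mul_diagonal, diagonal_mul, smul_eq_mul]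
    ring

theorem exists_eq_smul_conj [Nonempty ι] {φ : Matrix ι ι ℂ → Matrix ι ι ℂ}
    (hφ : PreservesProductsUpToAut φ) :
    ∃ c : ℂ, c * c = 1 ∧ ∃ u : (Matrix ι ι ℂ)ˣ,
      ∀ a, φ a = c • ((u : Matrix ι ι ℂ) * a * (↑u⁻¹ : Matrix ι ι ℂ)) := by
  have horth : Pairwise fun i j : ι =>
      φ (single i i 1) * φ (single i i 1) * (φ (single j j 1) * φ (single j j 1)) = 0 := by
    intro i j hij
    have h0 : φ (single i i 1) * φ (single j j 1) = 0 := hφ.mul_eq_zero (by simp [hij])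
    simp only [mul_assoc]
    rw [← mul_assoc (φ (single i i 1)) (φ (single j j 1)), h0, zero_mul, mul_zero]
  obtain ⟨u, hu⟩ := exists_units_conj_eq_single
    (fun i => hφ.isIdempotentElem_mul_self (by simp [IsIdempotentElem]))
    (fun i => by simp [hφ.trace_mul]) horth
  have hψ : PreservesProductsUpToAut
      fun x => (u : Matrix ι ι ℂ) * φ x * (↑u⁻¹ : Matrix ι ι ℂ) :=
    hφ.comp (isAlgAutomorphism_conj u)
  obtain ⟨c, hc, v, hv⟩ := hψ.exists_eq_smul_conj_of_mul_self_single fun i => by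
    simpa [mul_assoc] using hu i
  refine ⟨c, hc, u⁻¹ * v, fun a => ?_⟩
  calc φ a = ↑u⁻¹ * ((u : Matrix ι ι ℂ) * φ a * ↑u⁻¹) * u := by simp [mul_assoc]
    _ = _ := by rw [hv a]; simp [mul_assoc]

end MatrixAlgebra

end PreservesProductsUpToAut

theorem stmt1 (n : ℕ) (hn : 1 ≤ n)
    (φ : Matrix (Fin n) (Fin n) ℂ → Matrix (Fin n) (Fin n) ℂ)
    (hφ : ∀ a b : Matrix (Fin n) (Fin n) ℂ,
      ∃ θ : Matrix (Fin n) (Fin n) ℂ → Matrix (Fin n) (Fin n) ℂ,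
        IsAlgAutomorphism θ ∧ φ a * φ b = θ (a * b)) :
    IsAlgAutomorphism φ ∨ IsAlgAutomorphism (fun a => -φ a) := by
  have : Nonempty (Fin n) := Fin.pos_iff_nonempty.mp hn
  obtain ⟨c, hc, u, hu⟩ := PreservesProductsUpToAut.exists_eq_smul_conj hφ
  rcases mul_self_eq_one_iff.mp hc with rfl | rfl
  · left
    convert isAlgAutomorphism_conj u using 1
    exact funext fun a => by rw [hu, one_smul]
  · right
    convert isAlgAutomorphism_conj u using 1
    exact funext fun a => by rw [hu, neg_smul, one_smul, neg_neg]
end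

section
/- Let H be a complex Hilbert space and let φ : B(H) → B(H) be a (not necessarily linear, additive or continuous) map whose range contains all rank-one orthogonal projections on H. Suppose for any a, b ∈ B(H) there is a *-automorphism θ_{a,b} of B(H) with φ(a)*φ(b) = θ_{a,b}(a*b). Then φ(I) is a unitary operator on H and ‖φ(a)‖ = ‖a‖ for every a ∈ B(H). -/
set_option synthInstance.maxHeartbeats 1000000
set_option maxHeartbeats 1000000

/-- A `*`-automorphism of a complex `*`-algebra: a bijective complex-linear multiplicative
map preserving the star operation. -/
def IsStarAutomorphism {A : Type*} [Ring A] [Algebra ℂ A] [Star A] (θ : A → A) : Prop :=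
  Function.Bijective θ ∧ IsLinearMap ℂ θ ∧ (∀ a b : A, θ (a * b) = θ a * θ b) ∧
    ∀ a : A, θ (star a) = star (θ a)

/-!
`φ(a)* φ(b) = θ(a* b)` with `θ` isometric and unital gives `‖φ a‖ = ‖a‖` by the C⋆-identity and
`u* u = 1` for `u = φ 1`. Moreover `u* φ(a) = θ(a)`, so `‖u* p‖ = ‖p‖` for every `p` in the range
of `φ`; testing this on the rank-one projections onto unit vectors `x` gives `‖u* x‖ = ‖x‖`, that is,
`u*` is an isometry as well, and `u u* = 1`.
-/

namespace IsStarAutomorphism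

variable {A : Type*} [CStarAlgebra A] {θ : A → A}

theorem norm_map (hθ : IsStarAutomorphism θ) (a : A) : ‖θ a‖ = ‖a‖ := by
  obtain ⟨hbij, hlin, hmul, hstar⟩ := hθ
  let ψ : A →⋆ₙₐ[ℂ] A :=
    { toFun := θ, map_smul' := hlin.map_smul, map_zero' := hlin.map_zero,
      map_add' := hlin.map_add, map_mul' := hmul, map_star' := hstar }
  exact NonUnitalStarAlgHom.norm_map ψ hbij.injective a

theorem map_one (hθ : IsStarAutomorphism θ) : θ 1 = 1 := by
  obtain ⟨b, hb⟩ := hθ.1.2 1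
  simpa [hb] using (hθ.2.2.1 1 b).symm

end IsStarAutomorphism

theorem CStarRing.norm_eq_of_norm_star_mul_self_eq {E : Type*} [NonUnitalNormedRing E] [StarRing E]
    [CStarRing E] {a b : E} (h : ‖star a * a‖ = ‖star b * b‖) : ‖a‖ = ‖b‖ := by
  rw [CStarRing.norm_star_mul_self, CStarRing.norm_star_mul_self] at h
  exact (mul_self_inj_of_nonneg (norm_nonneg _) (norm_nonneg _)).mp h

namespace ContinuousLinearMap

variable {𝕜 E F : Type*} [RCLike 𝕜] [NormedAddCommGroup E] [InnerProductSpace 𝕜 E]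
  [NormedAddCommGroup F] [NormedSpace 𝕜 F]

theorem norm_comp_smulRight_innerSL (T : E →L[𝕜] F) (x : E) :
    ‖T ∘L (innerSL 𝕜 x).smulRight x‖ = ‖x‖ * ‖T x‖ := by
  have : T ∘L (innerSL 𝕜 x).smulRight x = (innerSL 𝕜 x).smulRight (T x) := by
    ext y
    simp
  rw [this, norm_smulRight_apply, innerSL_apply_norm]

theorem norm_map_of_norm_map_eq_one (T : E →L[𝕜] F) (h : ∀ x, ‖x‖ = 1 → ‖T x‖ = 1) (x : E) :
    ‖T x‖ = ‖x‖ := by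
  rcases eq_or_ne x 0 with rfl | hx
  · simp
  have hx' : ‖x‖ ≠ 0 := norm_ne_zero_iff.mpr hx
  have hunit : ‖((‖x‖⁻¹ : ℝ) : 𝕜) • x‖ = 1 := by
    rw [norm_smul, RCLike.norm_ofReal, abs_inv, abs_norm, inv_mul_cancel₀ hx']
  have := h _ hunit
  rw [map_smul, norm_smul, RCLike.norm_ofReal, abs_inv, abs_norm] at this
  field_simp at this
  linarith

end ContinuousLinearMap

section TwoLocal

variable {A : Type*} [CStarAlgebra A] {φ : A → A}
  (hφ : ∀ a b : A, ∃ θ : A → A, IsStarAutomorphism θ ∧ star (φ a) * φ b = θ (star a * b))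
include hφ

theorem norm_star_mul_eq_of_twoLocal (a b : A) : ‖star (φ a) * φ b‖ = ‖star a * b‖ := by
  obtain ⟨θ, hθ, h⟩ := hφ a b
  rw [h, hθ.norm_map]

theorem norm_map_of_twoLocal (a : A) : ‖φ a‖ = ‖a‖ :=
  CStarRing.norm_eq_of_norm_star_mul_self_eq (norm_star_mul_eq_of_twoLocal hφ a a)

theorem star_mul_self_map_one_of_twoLocal : star (φ 1) * φ 1 = 1 := by
  obtain ⟨θ, hθ, h⟩ := hφ 1 1
  rw [h, star_one, one_mul, hθ.map_one]

theorem norm_star_map_one_mul_of_twoLocal (a : A) : ‖star (φ 1) * φ a‖ = ‖φ a‖ := by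
  rw [norm_star_mul_eq_of_twoLocal hφ, star_one, one_mul, norm_map_of_twoLocal hφ]

end TwoLocal

theorem stmt14 {H : Type*} [NormedAddCommGroup H] [InnerProductSpace ℂ H]
    [CompleteSpace H]
    (φ : (H →L[ℂ] H) → (H →L[ℂ] H))
    -- the range of `φ` contains all rank-one orthogonal projections `y ↦ ⟨y, x⟩ x`
    (hrange : ∀ x : H, ‖x‖ = 1 → ∃ a, φ a = (innerSL ℂ x).smulRight x)
    -- operational 2-local `*`-automorphism condition
    (hφ : ∀ a b : H →L[ℂ] H, ∃ θ : (H →L[ℂ] H) → (H →L[ℂ] H),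
      IsStarAutomorphism θ ∧ star (φ a) * φ b = θ (star a * b)) :
    φ 1 ∈ unitary (H →L[ℂ] H) ∧ ∀ a : H →L[ℂ] H, ‖φ a‖ = ‖a‖ := by
  have hstar_isometry : ∀ x, ‖star (φ 1) x‖ = ‖x‖ :=
    (star (φ 1)).norm_map_of_norm_map_eq_one fun x hx => by
      obtain ⟨a, ha⟩ := hrange x hx
      have := norm_star_map_one_mul_of_twoLocal hφ a
      rwa [ha, ContinuousLinearMap.mul_def, ContinuousLinearMap.norm_comp_smulRight_innerSL,
        ContinuousLinearMap.norm_smulRight_apply, innerSL_apply_norm, hx, one_mul, one_mul] at this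
  have hmul_star : φ 1 * star (φ 1) = 1 := by
    simpa [ContinuousLinearMap.star_eq_adjoint, ← ContinuousLinearMap.mul_def] using
      (ContinuousLinearMap.norm_map_iff_adjoint_comp_self _).mp hstar_isometry
  exact ⟨Unitary.mem_iff.mpr ⟨star_mul_self_map_one_of_twoLocal hφ, hmul_star⟩,
    norm_map_of_twoLocal hφ⟩
end

section
/- Let H be a complex Hilbert space and let J be a conjugate-linear isometric involution on H. For every bounded finite-rank operator T on H, the operators T and JT*J are similar: there exists an invertible bounded linear operator S on H with T = S(JT*J)S⁻¹. -/
/-!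
Let `V` be the span of the ranges of `T` and `T*` and of their images under `J`. It is
finite-dimensional and `J`-stable, `T` and `J T* J` map it into itself and vanish on `Vᗮ`, and
`(x, y) ↦ ⟪J x, y⟫` is a nondegenerate bilinear form on `V` for which `J T* J` is the adjoint of
`T`. So on `V`, `J T* J` is similar to the transpose of `T`, and every endomorphism of a
finite-dimensional space is similar to its transpose: as a torsion `K[X]`-module the space is a
sum of cyclic modules `K[X]/(q)`, and on each of them `(a, b) ↦ coeff_{deg q - 1} (a b mod q)` is
a nondegenerate form for which multiplication by `X` is self-adjoint. A similarity on `V`,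
extended by the identity on `Vᗮ`, is the required `S`.
-/

set_option synthInstance.maxHeartbeats 1000000
set_option maxHeartbeats 1000000

open Cardinal

/-- A conjugate-linear isometric involution of a complex Hilbert space. -/
def IsConjLinearIsometricInvolution {H : Type*} [NormedAddCommGroup H]
    [InnerProductSpace ℂ H] (J : H → H) : Prop :=
  (∀ x y : H, J (x + y) = J x + J y) ∧
    (∀ (c : ℂ) (x : H), J (c • x) = (starRingEnd ℂ) c • J x) ∧
    (∀ x : H, ‖J x‖ = ‖x‖) ∧ ∀ x : H, J (J x) = x

open Polynomial DirectSum ContinuousLinearMap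
open LinearMap (BilinForm)

section SimilarToTranspose

variable {K : Type*} [Field K]

theorem Polynomial.exists_dual_mul_ne_zero_quotient {g : K[X]} (hg : g ≠ 0) :
    ∃ μ : (K[X] ⧸ K[X] ∙ g) →ₗ[K] K, ∀ a ≠ 0, ∃ b, μ (a * b) ≠ 0 := by
  classical
  set m := normalize g
  have hm : m.Monic := monic_normalize hg
  set n := m.natDegree
  have mem_span_iff (r : K[X]) : r ∈ K[X] ∙ g ↔ m ∣ r := by
    rw [(normalize_associated g).dvd_iff_dvd_left]
    exact Ideal.mem_span_singleton
  have mk_modByMonic (r : K[X]) :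
      (Submodule.Quotient.mk (r %ₘ m) : K[X] ⧸ K[X] ∙ g) = Submodule.Quotient.mk r := by
    rw [Submodule.Quotient.eq, mem_span_iff, modByMonic_eq_sub_mul_div, sub_sub_cancel_left,
      dvd_neg]
    exact dvd_mul_right _ _
  let ν : K[X] →ₗ[K] K := (lcoeff K (n - 1)).comp (modByMonicHom m)
  have hν : (K[X] ∙ g).restrictScalars K ≤ LinearMap.ker ν := by
    intro r hr
    rw [Submodule.restrictScalars_mem, mem_span_iff, ← modByMonic_eq_zero_iff_dvd hm] at hr
    simp [ν, hr]
  let μ := (((K[X] ∙ g).restrictScalars K).liftQ ν hν).comp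
    (Submodule.Quotient.restrictScalarsEquiv K (K[X] ∙ g)).symm.toLinearMap
  have hμ (r : K[X]) : μ (Submodule.Quotient.mk r) = (r %ₘ m).coeff (n - 1) := rfl
  refine ⟨μ, fun a ha ↦ ?_⟩
  obtain ⟨r, rfl⟩ := Submodule.Quotient.mk_surjective _ a
  rw [← mk_modByMonic] at ha ⊢
  set r' := r %ₘ m
  have hr' : r' ≠ 0 := by rintro h; simp [h] at ha
  have hdeg : r'.natDegree < n := natDegree_lt_natDegree hr' (degree_modByMonic_lt r hm)
  -- `r' * X ^ j` has degree `n - 1`: it is its own remainder, with top coefficient that of `r'`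
  set j := n - 1 - r'.natDegree
  have hsum : r'.natDegree + j = n - 1 := by omega
  have hlt : (r' * X ^ j).degree < m.degree := by
    rw [degree_eq_natDegree hm.ne_zero, degree_eq_natDegree (by simp [hr']),
      natDegree_mul_X_pow _ hr', hsum]
    exact_mod_cast (by omega : n - 1 < n)
  refine ⟨Submodule.Quotient.mk (X ^ j), ?_⟩
  rw [show (Submodule.Quotient.mk r' : K[X] ⧸ K[X] ∙ g) * Submodule.Quotient.mk (X ^ j)
    = Submodule.Quotient.mk (r' * X ^ j) from rfl, hμ, (modByMonic_eq_self_iff hm).2 hlt,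
    ← hsum, coeff_mul_X_pow]
  exact leadingCoeff_ne_zero.2 hr'

theorem Polynomial.exists_separatingLeft_smul_comm_quotient {g : K[X]} (hg : g ≠ 0) :
    ∃ B : BilinForm K (K[X] ⧸ K[X] ∙ g), B.SeparatingLeft ∧
      ∀ (p : K[X]) a b, B (p • a) b = B a (p • b) := by
  obtain ⟨μ, hμ⟩ := exists_dual_mul_ne_zero_quotient hg
  refine ⟨(LinearMap.mul K _).compr₂ μ, fun a ha ↦ ?_, fun p a b ↦ ?_⟩
  · by_contra ha0
    obtain ⟨b, hb⟩ := hμ a ha0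
    exact hb (ha b)
  · simp only [LinearMap.compr₂_apply, LinearMap.mul_apply', smul_mul_assoc, mul_smul_comm]

theorem DirectSum.exists_separatingLeft_smul_comm {R ι : Type*} [Semiring R] [Fintype ι]
    [DecidableEq ι] {M : ι → Type*} [∀ i, AddCommGroup (M i)] [∀ i, Module K (M i)]
    [∀ i, Module R (M i)] (B : ∀ i, BilinForm K (M i)) (hB : ∀ i, (B i).SeparatingLeft)
    (hsmul : ∀ i (p : R) a b, B i (p • a) b = B i a (p • b)) :
    ∃ B' : BilinForm K (⨁ i, M i), B'.SeparatingLeft ∧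
      ∀ (p : R) a b, B' (p • a) b = B' a (p • b) := by
  let B' : BilinForm K (⨁ i, M i) :=
    ∑ i, (B i).compl₁₂ (DirectSum.component K ι M i) (DirectSum.component K ι M i)
  have hB' (a b : ⨁ i, M i) : B' a b = ∑ i, B i (a i) (b i) := by
    simp only [B', LinearMap.sum_apply, LinearMap.compl₁₂_apply]
    rfl
  refine ⟨B', fun a ha ↦ ?_, fun p a b ↦ ?_⟩
  · ext i
    refine hB i (a i) fun b ↦ ?_
    have := ha (DirectSum.of M i b)
    rwa [hB', Finset.sum_eq_single i (fun j _ hji ↦ by rw [of_eq_of_ne _ _ _ hji, map_zero])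
      (by simp), of_eq_same] at this
  · simp only [hB', DirectSum.smul_apply, hsmul]

theorem LinearMap.exists_separatingLeft_isAdjointPair_self {V : Type*} [AddCommGroup V]
    [Module K V] [FiniteDimensional K V] (f : V →ₗ[K] V) :
    ∃ B : BilinForm K V, B.SeparatingLeft ∧ B.IsAdjointPair B f f := by
  classical
  obtain ⟨ι, _, p, hp, e, ⟨E⟩⟩ := Module.equiv_directSum_of_isTorsion
    (Module.AEval.isTorsion_of_finiteDimensional K V f)
  choose B hB hsmul using fun i ↦
    exists_separatingLeft_smul_comm_quotient (pow_ne_zero _ (hp i).ne_zero)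
  obtain ⟨B', hB', hsmul'⟩ := DirectSum.exists_separatingLeft_smul_comm B hB hsmul
  let F : V ≃ₗ[K] ⨁ i, K[X] ⧸ K[X] ∙ p i ^ e i :=
    (Module.AEval'.of f).trans (E.restrictScalars K)
  have hF (x : V) : F (f x) = (X : K[X]) • F x := by
    simp [F, ← Module.AEval'.X_smul_of]
  refine ⟨B'.compl₁₂ F F, fun x hx ↦ F.map_eq_zero_iff.1 (hB' _ fun y ↦ ?_), fun x y ↦ ?_⟩
  · simpa using hx (F.symm y)
  · simp only [LinearMap.compl₁₂_apply, LinearEquiv.coe_coe, hF, hsmul']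

theorem LinearMap.exists_linearEquiv_conj_of_isAdjointPair {V : Type*} [AddCommGroup V]
    [Module K V] [FiniteDimensional K V] {B : BilinForm K V} (hB : B.SeparatingLeft)
    {f g : V →ₗ[K] V} (hfg : B.IsAdjointPair B f g) :
    ∃ S : V ≃ₗ[K] V, ∀ x, S (f x) = g (S x) := by
  -- `B` identifies `f` with the transpose of `g`, and `C` identifies `g` with its own transpose
  obtain ⟨C, hC, hgg⟩ := exists_separatingLeft_isAdjointPair_self g
  have injective {B : BilinForm K V} (hB : B.SeparatingLeft) : Function.Injective B :=
    LinearMap.ker_eq_bot.1 (LinearMap.separatingLeft_iff_ker_eq_bot.1 hB)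
  let toDualB := LinearMap.linearEquivOfInjective B (injective hB) Subspace.dual_finrank_eq.symm
  let toDualC := LinearMap.linearEquivOfInjective C (injective hC) Subspace.dual_finrank_eq.symm
  let S := toDualB.trans toDualC.symm
  have hS (x : V) : C (S x) = B x := by
    rw [← LinearMap.linearEquivOfInjective_apply (injective hC) Subspace.dual_finrank_eq.symm,
      LinearEquiv.trans_apply, LinearEquiv.apply_symm_apply,
      LinearMap.linearEquivOfInjective_apply]
  refine ⟨S, fun x ↦ injective hC (LinearMap.ext fun y ↦ ?_)⟩
  rw [hS, hfg, ← hS, hgg]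

end SimilarToTranspose

section Reducing

variable {𝕜 E F : Type*} [RCLike 𝕜] [NormedAddCommGroup E] [InnerProductSpace 𝕜 E]

namespace Submodule

variable (K : Submodule 𝕜 E) [K.HasOrthogonalProjection]

theorem exists_continuousLinearEquiv_extend (S : K ≃L[𝕜] K) :
    ∃ S' : E ≃L[𝕜] E, (∀ x : K, S' x = S x) ∧ ∀ x ∈ Kᗮ, S' x = x := by
  let extend (R : K →L[𝕜] K) : E →L[𝕜] E :=
    K.subtypeL ∘L R ∘L K.orthogonalProjectionOnto + (.id 𝕜 E - K.starProjection)
  have extend_apply (R : K →L[𝕜] K) (x : E) :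
      extend R x = R (K.orthogonalProjectionOnto x) + (x - K.starProjection x) := rfl
  have extend_of_mem (R : K →L[𝕜] K) (x : K) : extend R x = R x := by
    simp [extend_apply]
  have extend_of_mem_orthogonal (R : K →L[𝕜] K) {x : E} (hx : x ∈ Kᗮ) : extend R x = x := by
    simp [extend_apply, orthogonalProjectionOnto_eq_zero_iff.2 hx, starProjection_apply]
  have extend_extend (R R' : K ≃L[𝕜] K) (hR : ∀ x, R (R' x) = x) (x : E) :
      extend R (extend R' x) = x := by
    rw [extend_apply R' x, map_add, extend_of_mem,
      extend_of_mem_orthogonal _ (sub_starProjection_mem_orthogonal x)]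
    simp [hR]
  refine ⟨.equivOfInverse (extend S) (extend S.symm) (extend_extend _ _ S.symm_apply_apply)
    (extend_extend _ _ S.apply_symm_apply), extend_of_mem S, fun x hx ↦ ?_⟩
  exact extend_of_mem_orthogonal S hx

theorem exists_continuousLinearEquiv_conj_of_restrict {f g : E →ₗ[𝕜] E}
    (hfK : ∀ x ∈ K, f x ∈ K) (hgK : ∀ x ∈ K, g x ∈ K) (hfK' : ∀ x ∈ Kᗮ, f x = 0)
    (hgK' : ∀ x ∈ Kᗮ, g x = 0) (S : K ≃L[𝕜] K)
    (hS : ∀ x, S (f.restrict hfK x) = g.restrict hgK (S x)) :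
    ∃ S' : E ≃L[𝕜] E, ∀ x, S' (f x) = g (S' x) := by
  obtain ⟨S', hS'K, hS'K'⟩ := K.exists_continuousLinearEquiv_extend S
  refine ⟨S', fun x ↦ ?_⟩
  obtain ⟨k, w, hw, rfl⟩ : ∃ (k : K) (w : E), w ∈ Kᗮ ∧ k + w = x :=
    ⟨K.orthogonalProjectionOnto x, x - K.starProjection x, sub_starProjection_mem_orthogonal x,
      by simp⟩
  rw [map_add, hfK' w hw, add_zero, map_add, hS'K' w hw, map_add, hgK' w hw, add_zero, hS'K]
  exact (hS'K _).trans (congrArg Subtype.val (hS k))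

end Submodule

variable [NormedAddCommGroup F] [InnerProductSpace 𝕜 F] [CompleteSpace E] [CompleteSpace F]

theorem ContinuousLinearMap.range_adjoint_eq_map_range (T : E →L[𝕜] F)
    [T.range.HasOrthogonalProjection] :
    (adjoint T).range = T.range.map (adjoint T : F →ₗ[𝕜] E) := by
  refine le_antisymm ?_ (LinearMap.map_le_range)
  rintro _ ⟨y, rfl⟩
  have hy : y - T.range.starProjection y ∈ (adjoint T).ker := by
    rw [← orthogonal_range]
    exact Submodule.sub_starProjection_mem_orthogonal y
  refine ⟨_, Submodule.starProjection_apply_mem _ y, ?_⟩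
  rw [LinearMap.mem_ker, map_sub, sub_eq_zero] at hy
  exact hy.symm

theorem ContinuousLinearMap.apply_eq_zero_of_range_adjoint_le (T : E →L[𝕜] F)
    {V : Submodule 𝕜 E} (hV : (adjoint T).range ≤ V) {x : E} (hx : x ∈ Vᗮ) :
    T x = 0 := by
  simpa [orthogonal_range] using Submodule.orthogonal_le hV hx

end Reducing

section Conjugation

theorem LinearIsometry.inner_map_map_conj {E F : Type*} [NormedAddCommGroup E]
    [InnerProductSpace ℂ E] [NormedAddCommGroup F] [InnerProductSpace ℂ F]
    (f : E →ₗᵢ⋆[ℂ] F) (x y : E) : inner ℂ (f x) (f y) = inner ℂ y x := by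
  have re_inner_map_map (x y : E) : (inner ℂ (f x) (f y)).re = (inner ℂ x y).re := by
    rw [← RCLike.re_to_complex, ← RCLike.re_to_complex,
      re_inner_eq_norm_add_mul_self_sub_norm_mul_self_sub_norm_mul_self_div_two,
      re_inner_eq_norm_add_mul_self_sub_norm_mul_self_sub_norm_mul_self_div_two,
      ← map_add, f.norm_map, f.norm_map, f.norm_map]
  apply Complex.ext
  · rw [re_inner_map_map, ← inner_conj_symm, Complex.conj_re]
  · -- `im z = re (conj I * z)`, and `f (I • y) = conj I • f y`
    have h := re_inner_map_map x (Complex.I • y)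
    rw [f.map_smulₛₗ, inner_smul_right, inner_smul_right] at h
    rw [← inner_conj_symm y x, Complex.conj_im]
    simpa [Complex.conj_I] using h

variable {H : Type*} [NormedAddCommGroup H] [InnerProductSpace ℂ H]

namespace IsConjLinearIsometricInvolution

variable {J : H → H}

def toLinearIsometryEquiv (hJ : IsConjLinearIsometricInvolution J) : H ≃ₗᵢ⋆[ℂ] H where
  toLinearEquiv := .ofInvolutive ⟨⟨J, hJ.1⟩, hJ.2.1⟩ hJ.2.2.2
  norm_map' := hJ.2.2.1

end IsConjLinearIsometricInvolution

namespace LinearIsometryEquiv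

theorem apply_mem_orthogonal {ι : H ≃ₗᵢ⋆[ℂ] H} (hι : Function.Involutive ι)
    {V : Submodule ℂ H} (hV : ∀ x ∈ V, ι x ∈ V) {x : H} (hx : x ∈ Vᗮ) : ι x ∈ Vᗮ :=
  fun v hv ↦ by
    rw [← hι v]
    exact (ι.toLinearIsometry.inner_map_map_conj (ι v) x).trans
      (Submodule.inner_left_of_mem_orthogonal (hV v hv) hx)

variable [CompleteSpace H]

variable (ι : H ≃ₗᵢ⋆[ℂ] H) (T : H →L[ℂ] H)

noncomputable def transpose : H →L[ℂ] H :=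
  (ι.toContinuousLinearEquiv : H →L⋆[ℂ] H) ∘SL adjoint T ∘SL
    (ι.toContinuousLinearEquiv : H →L⋆[ℂ] H)

theorem transpose_apply (x : H) : ι.transpose T x = ι (adjoint T (ι x)) := rfl

noncomputable def reducingSubspace : Submodule ℂ H :=
  let W := T.range ⊔ (adjoint T).range
  W ⊔ W.map ι.toLinearEquiv.toLinearMap

theorem range_le_reducingSubspace : T.range ≤ ι.reducingSubspace T :=
  le_sup_left.trans le_sup_left

theorem range_adjoint_le_reducingSubspace : (adjoint T).range ≤ ι.reducingSubspace T :=
  le_sup_right.trans le_sup_left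

instance [FiniteDimensional ℂ T.range] : FiniteDimensional ℂ (ι.reducingSubspace T) := by
  have : FiniteDimensional ℂ (adjoint T).range := by
    rw [range_adjoint_eq_map_range]
    infer_instance
  unfold reducingSubspace
  infer_instance

variable {ι}

theorem apply_mem_reducingSubspace (hι : Function.Involutive ι) {x : H}
    (hx : x ∈ ι.reducingSubspace T) : ι x ∈ ι.reducingSubspace T := by
  obtain ⟨y, hy, _, ⟨z, hz, rfl⟩, rfl⟩ := Submodule.mem_sup.1 hx
  rw [LinearEquiv.coe_toLinearMap, coe_toLinearEquiv, map_add, hι z, add_comm]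
  exact Submodule.add_mem_sup hz ⟨y, hy, rfl⟩

theorem exists_conj_transpose (hι : Function.Involutive ι) [FiniteDimensional ℂ T.range] :
    ∃ S : H ≃L[ℂ] H, ∀ x, S (ι.transpose T x) = T (S x) := by
  set V := ι.reducingSubspace T
  have hιV (x : H) (hx : x ∈ V) : ι x ∈ V := apply_mem_reducingSubspace T hι hx
  have hTV (x : H) (_ : x ∈ V) : T x ∈ V := range_le_reducingSubspace ι T ⟨x, rfl⟩
  have hTtV (x : H) (_ : x ∈ V) : ι.transpose T x ∈ V :=
    hιV _ (range_adjoint_le_reducingSubspace ι T ⟨ι x, rfl⟩)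
  have hTV' (x : H) (hx : x ∈ Vᗮ) : T x = 0 :=
    T.apply_eq_zero_of_range_adjoint_le (range_adjoint_le_reducingSubspace ι T) hx
  have hTtV' (x : H) (hx : x ∈ Vᗮ) : ι.transpose T x = 0 := by
    rw [transpose_apply, (adjoint T).apply_eq_zero_of_range_adjoint_le
      (by rw [adjoint_adjoint]; exact range_le_reducingSubspace ι T)
      (apply_mem_orthogonal hι hιV hx), map_zero]
  let φ : BilinForm ℂ V :=
    ((innerₛₗ ℂ).comp ι.toLinearEquiv.toLinearMap).compl₁₂ V.subtype V.subtype
  have hφ_apply (x y : V) : φ x y = inner ℂ (ι x) y := rfl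
  have hφ : φ.SeparatingLeft := fun x hx ↦ by
    have h := hx ⟨ι x, hιV x x.2⟩
    rwa [hφ_apply, inner_self_eq_zero, LinearIsometryEquiv.map_eq_zero_iff,
      Submodule.coe_eq_zero] at h
  have hφT : φ.IsAdjointPair φ ((ι.transpose T : H →ₗ[ℂ] H).restrict hTtV)
      ((T : H →ₗ[ℂ] H).restrict hTV) := fun x y ↦ by
    rw [hφ_apply, hφ_apply]
    exact (congrArg (inner ℂ · (y : H)) (hι _)).trans (adjoint_inner_left T y (ι x))
  obtain ⟨S, hS⟩ := LinearMap.exists_linearEquiv_conj_of_isAdjointPair hφ hφT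
  exact V.exists_continuousLinearEquiv_conj_of_restrict hTtV hTV hTtV' hTV'
    S.toContinuousLinearEquiv hS

end LinearIsometryEquiv

end Conjugation

theorem stmt19 {H : Type*} [NormedAddCommGroup H] [InnerProductSpace ℂ H]
    [CompleteSpace H]
    (J : H → H) (hJ : IsConjLinearIsometricInvolution J)
    (T : H →L[ℂ] H)
    -- `T` has finite rank
    (hT : LinearMap.rank (T : H →ₗ[ℂ] H) < ℵ₀) :
    -- `T` and `J T* J` are similar: `T = S (J T* J) S⁻¹`
    ∃ S : H ≃L[ℂ] H, ∀ x : H,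
      T x = S (J (ContinuousLinearMap.adjoint T (J (S.symm x)))) := by
  have : FiniteDimensional ℂ T.range := Module.rank_lt_aleph0_iff.mp hT
  have hι : Function.Involutive hJ.toLinearIsometryEquiv := hJ.2.2.2
  obtain ⟨S, hS⟩ := LinearIsometryEquiv.exists_conj_transpose T hι
  refine ⟨S, fun x ↦ ?_⟩
  have h := hS (S.symm x)
  rw [S.apply_symm_apply] at h
  exact h.symm
end
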